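/- arXiv:2503.01061 — 2 statements merged into one kernel-verified Lean document; each statement's English description precedes it below -/
import Mathlib

section
/- Codimension-one concentration of mass on the polydisk: Let n ≥ 1 and let g be a continuous complex-valued function on the closed unit polydisk in ℂⁿ. Then lim_{t → +∞} t·∫_{𝔻ⁿ} |g(z)|² / (t|z₁|² + 1)² dV(z) = π·∫_{𝔻^{n−1}} |g(0, z')|² dV(z'). -/
open MeasureTheory Metric Set

section Aux


variable {n : ℕ} {g : (Fin (n + 1) → ℂ) → ℂ}

noncomputable def sliceInt (n : ℕ) (g : (Fin (n + 1) → ℂ) → ℂ) (w : ℂ) : ℝ :=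
  ∫ z' in ball (0 : Fin n → ℂ) 1, ‖g (Fin.cons w z')‖ ^ 2

lemma cons_mem_closedBall {n : ℕ} {w : ℂ} {z' : Fin n → ℂ}
    (hw : w ∈ closedBall (0:ℂ) 1) (hz : z' ∈ closedBall (0 : Fin n → ℂ) 1) :
    Fin.cons w z' ∈ closedBall (0 : Fin (n+1) → ℂ) 1 := by
  rw [mem_closedBall_zero_iff] at *
  rw [pi_norm_le_iff_of_nonneg one_pos.le, Fin.forall_fin_succ]
  refine ⟨by simpa using hw, fun j => ?_⟩
  simp only [Fin.cons_succ]
  exact (norm_le_pi_norm z' j).trans hz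

lemma continuous_consP (n : ℕ) :
    Continuous (fun p : ℂ × (Fin n → ℂ) => (Fin.cons p.1 p.2 : Fin (n+1) → ℂ)) := by
  apply continuous_pi; intro i
  refine Fin.cases ?_ ?_ i
  · simpa using continuous_fst
  · intro j; simp only [Fin.cons_succ]; exact (continuous_apply j).comp continuous_snd

lemma continuous_consw (n : ℕ) (w : ℂ) :
    Continuous (fun z' : Fin n → ℂ => (Fin.cons w z' : Fin (n+1) → ℂ)) :=
  (continuous_consP n).comp (continuous_const.prodMk continuous_id)

lemma continuous_consz (n : ℕ) (z' : Fin n → ℂ) :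
    Continuous (fun w : ℂ => (Fin.cons w z' : Fin (n+1) → ℂ)) :=
  (continuous_consP n).comp (continuous_id.prodMk continuous_const)

lemma slice_cont (hg : ContinuousOn g (closedBall 0 1)) {w : ℂ} (hw : w ∈ closedBall (0:ℂ) 1) :
    ContinuousOn (fun z' : Fin n → ℂ => ‖g (Fin.cons w z')‖ ^ 2) (closedBall 0 1) :=
  ((hg.comp (continuous_consw n w).continuousOn
    (fun _ hz' => cons_mem_closedBall hw hz')).norm.pow 2)

lemma slice_int (hg : ContinuousOn g (closedBall 0 1)) {w : ℂ} (hw : w ∈ closedBall (0:ℂ) 1) :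
    IntegrableOn (fun z' : Fin n → ℂ => ‖g (Fin.cons w z')‖ ^ 2) (ball 0 1) :=
  ((slice_cont hg hw).integrableOn_compact (isCompact_closedBall _ _)).mono_set
    ball_subset_closedBall

lemma slice_bound (hg : ContinuousOn g (closedBall 0 1)) {M : ℝ}
    (hgM : ∀ z ∈ closedBall (0 : Fin (n+1) → ℂ) 1, ‖g z‖ ≤ M)
    {w : ℂ} (hw : w ∈ closedBall (0:ℂ) 1) :
    |sliceInt n g w| ≤ M^2 * (volume (ball (0 : Fin n → ℂ) 1)).toReal := by
  rw [sliceInt, ← Real.norm_eq_abs]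
  apply norm_setIntegral_le_of_norm_le_const measure_ball_lt_top ?_
  intro z' hz'
  rw [Real.norm_of_nonneg (by positivity)]
  exact pow_le_pow_left₀ (norm_nonneg _)
    (hgM _ (cons_mem_closedBall hw (ball_subset_closedBall hz'))) 2

lemma slice_continuity_zero (hg : ContinuousOn g (closedBall 0 1)) {ε : ℝ} (hε : 0 < ε) :
    ∃ δ > 0, δ ≤ 1 ∧ ∀ w : ℂ, ‖w‖ < δ →
      |sliceInt n g w - sliceInt n g 0| ≤ ε * (volume (ball (0 : Fin n → ℂ) 1)).toReal := by
  have hqc : ContinuousOn (fun z => ‖g z‖^2) (closedBall (0 : Fin (n+1) → ℂ) 1) := hg.norm.pow 2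
  have huc := (isCompact_closedBall (0 : Fin (n+1) → ℂ) 1).uniformContinuousOn_of_continuous hqc
  rw [Metric.uniformContinuousOn_iff] at huc
  obtain ⟨δ, hδpos, hδ⟩ := huc ε hε
  refine ⟨min δ 1, lt_min hδpos one_pos, min_le_right _ _, ?_⟩
  intro w hw
  have hw1 : ‖w‖ < 1 := lt_of_lt_of_le hw (min_le_right _ _)
  have hwc : w ∈ closedBall (0:ℂ) 1 := by rw [mem_closedBall_zero_iff]; exact hw1.le
  have h0c : (0:ℂ) ∈ closedBall (0:ℂ) 1 := mem_closedBall_self one_pos.le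
  rw [sliceInt, sliceInt, ← integral_sub (slice_int hg hwc) (slice_int hg h0c),
    ← Real.norm_eq_abs]
  apply norm_setIntegral_le_of_norm_le_const measure_ball_lt_top ?_
  intro z' hz'
  have hz'c := ball_subset_closedBall hz'
  have hd : dist (Fin.cons w z' : Fin (n+1) → ℂ) (Fin.cons 0 z') < δ := by
    have hle : dist (Fin.cons w z' : Fin (n+1) → ℂ) (Fin.cons 0 z') ≤ ‖w‖ := by
      rw [dist_pi_le_iff (norm_nonneg w)]
      intro i
      refine Fin.cases ?_ ?_ i
      · simp [dist_eq_norm]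
      · intro j; simp
    exact lt_of_le_of_lt hle (lt_of_lt_of_le hw (min_le_left _ _))
  have hword := hδ _ (cons_mem_closedBall hwc hz'c) _ (cons_mem_closedBall h0c hz'c) hd
  rw [Real.dist_eq] at hword
  rw [Real.norm_eq_abs]
  exact hword.le

lemma slice_continuous (hg : ContinuousOn g (closedBall 0 1)) {M : ℝ}
    (hgM : ∀ z ∈ closedBall (0 : Fin (n+1) → ℂ) 1, ‖g z‖ ≤ M) :
    ContinuousOn (sliceInt n g) (closedBall (0:ℂ) 1) := by
  apply continuousOn_of_dominated (bound := fun _ => M^2)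
  · intro w hw
    exact ((slice_cont hg hw).mono ball_subset_closedBall).aestronglyMeasurable
      measurableSet_ball
  · intro w hw
    apply (ae_restrict_iff' measurableSet_ball).2 (Filter.Eventually.of_forall ?_)
    intro z' hz'
    rw [Real.norm_of_nonneg (by positivity)]
    exact pow_le_pow_left₀ (norm_nonneg _)
      (hgM _ (cons_mem_closedBall hw (ball_subset_closedBall hz'))) 2
  · exact integrableOn_const measure_ball_lt_top.ne
  · apply (ae_restrict_iff' measurableSet_ball).2 (Filter.Eventually.of_forall ?_)
    intro z' hz'
    exact (hg.comp (continuous_consz n z').continuousOn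
      (fun w hw => cons_mem_closedBall hw (ball_subset_closedBall hz'))).norm.pow 2


lemma preimage_ball_eq (n : ℕ) :
    ((MeasurableEquiv.piFinSuccAbove (fun _ : Fin (n+1) => ℂ) 0).symm) ⁻¹' (ball 0 1) =
      (ball (0:ℂ) 1) ×ˢ (ball (0 : Fin n → ℂ) 1) := by
  ext ⟨w, z'⟩
  simp only [Set.mem_preimage, MeasurableEquiv.piFinSuccAbove_symm_apply, Fin.insertNth_zero',
    Fin.consEquiv, mem_ball_zero_iff, Set.mem_prod]
  rw [pi_norm_lt_iff one_pos, Fin.forall_fin_succ]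
  simp [Fin.cons_zero, Fin.cons_succ, pi_norm_lt_iff one_pos]

lemma reduction (n : ℕ) (g : (Fin (n+1) → ℂ) → ℂ) (hg : ContinuousOn g (closedBall 0 1))
    (t : ℝ) (ht : 0 < t) :
    t * ∫ z in ball (0 : Fin (n+1) → ℂ) 1, ‖g z‖^2 / (t * ‖z 0‖^2 + 1)^2
      = ∫ w in ball (0:ℂ) 1, (t / (t * ‖w‖^2 + 1)^2) * sliceInt n g w := by
  have hmp := (MeasureTheory.volume_preserving_piFinSuccAbove (fun _ : Fin (n+1) => ℂ) 0).symm
  set e := (MeasurableEquiv.piFinSuccAbove (fun _ : Fin (n+1) => ℂ) 0).symm with he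
  have hesymm : ∀ (w : ℂ) (z' : Fin n → ℂ), e (w, z') = Fin.cons w z' := by
    intro w z'
    simp [he, MeasurableEquiv.piFinSuccAbove_symm_apply, Fin.insertNth_zero', Fin.consEquiv]
  -- transfer to product
  rw [← hmp.setIntegral_preimage_emb e.measurableEmbedding
      (fun z => ‖g z‖^2 / (t * ‖z 0‖^2 + 1)^2) (ball 0 1), preimage_ball_eq n]
  -- integrability on the product
  have hK : IsCompact ((closedBall (0:ℂ) 1) ×ˢ (closedBall (0 : Fin n → ℂ) 1)) :=
    (isCompact_closedBall _ _).prod (isCompact_closedBall _ _)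
  have hcont : ContinuousOn
      (fun p : ℂ × (Fin n → ℂ) => ‖g (Fin.cons p.1 p.2)‖^2 / (t * ‖p.1‖^2 + 1)^2)
      ((closedBall (0:ℂ) 1) ×ˢ (closedBall (0 : Fin n → ℂ) 1)) := by
    apply ContinuousOn.div
    · exact (((hg.comp (continuous_consP n).continuousOn (fun p hp =>
        cons_mem_closedBall hp.1 hp.2)).norm).pow 2)
    · fun_prop
    · intro p hp
      positivity
  have hint : IntegrableOn
      (fun p : ℂ × (Fin n → ℂ) => ‖g (Fin.cons p.1 p.2)‖^2 / (t * ‖p.1‖^2 + 1)^2)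
      ((ball (0:ℂ) 1) ×ˢ (ball (0 : Fin n → ℂ) 1)) volume :=
    (hcont.integrableOn_compact hK).mono_set
      (Set.prod_mono ball_subset_closedBall ball_subset_closedBall)
  calc t * ∫ p in (ball (0:ℂ) 1) ×ˢ (ball (0 : Fin n → ℂ) 1),
        ‖g (e p)‖^2 / (t * ‖(e p) 0‖^2 + 1)^2
      = t * ∫ p in (ball (0:ℂ) 1) ×ˢ (ball (0 : Fin n → ℂ) 1),
        ‖g (Fin.cons p.1 p.2)‖^2 / (t * ‖p.1‖^2 + 1)^2 := by
        congr 1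
        apply setIntegral_congr_fun (measurableSet_ball.prod measurableSet_ball)
        intro p hp
        obtain ⟨w, z'⟩ := p
        simp only [hesymm w z', Fin.cons_zero]
    _ = t * ∫ w in ball (0:ℂ) 1, ∫ z' in ball (0 : Fin n → ℂ) 1,
        ‖g (Fin.cons w z')‖^2 / (t * ‖w‖^2 + 1)^2 := by
        rw [Measure.volume_eq_prod] at hint ⊢
        rw [setIntegral_prod _ hint]
    _ = ∫ w in ball (0:ℂ) 1, (t / (t * ‖w‖^2 + 1)^2) *
        ∫ z' in ball (0 : Fin n → ℂ) 1, ‖g (Fin.cons w z')‖^2 := by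
        rw [← integral_const_mul]
        congr 1
        funext w
        rw [integral_div, div_mul_eq_mul_div, mul_div_assoc']

lemma kernel_antideriv {t : ℝ} (ht : 0 < t) (y : ℝ) :
    HasDerivAt (fun y : ℝ => -(1/2) * (t * y^2 + 1)⁻¹) (y * (t / (t * y^2 + 1)^2)) y := by
  have h1 : HasDerivAt (fun y : ℝ => t * y^2 + 1) (t * (2 * y)) y := by
    simpa using (((hasDerivAt_pow 2 y)).const_mul t).add_const 1
  have hne : t * y^2 + 1 ≠ 0 := by positivity
  have := (h1.inv hne).const_mul (-(1/2) : ℝ)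
  refine this.congr_deriv ?_
  ring

lemma kernel_integral {t : ℝ} (ht : 0 < t) :
    ∫ w in ball (0:ℂ) 1, t / (t * ‖w‖^2 + 1)^2 = Real.pi * (t / (t + 1)) := by
  set f : ℝ → ℝ := fun y => if 0 ≤ y ∧ y < 1 then t / (t * y^2 + 1)^2 else 0 with hf
  have h1 : ∫ w in ball (0:ℂ) 1, t / (t * ‖w‖^2 + 1)^2 = ∫ x : ℂ, f ‖x‖ := by
    rw [← integral_indicator measurableSet_ball]
    congr 1
    funext x
    by_cases hx : x ∈ ball (0:ℂ) 1
    · rw [indicator_of_mem hx]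
      simp only [mem_ball_zero_iff] at hx
      simp only [hf]
      rw [if_pos ⟨norm_nonneg x, hx⟩]
    · rw [indicator_of_notMem hx]
      simp only [mem_ball_zero_iff, not_lt] at hx
      simp only [hf]
      rw [if_neg (by rintro ⟨-, h⟩; linarith)]
  rw [h1, integral_fun_norm_addHaar (volume : Measure ℂ) f]
  have hdim : Module.finrank ℝ ℂ = 2 := Complex.finrank_real_complex
  rw [hdim, measureReal_def, Complex.volume_ball]
  have hvol : ((ENNReal.ofReal (1:ℝ)) ^ 2 * (NNReal.pi : ENNReal)).toReal = Real.pi := by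
    simp [ENNReal.toReal_mul, ENNReal.toReal_pow]
  rw [hvol]
  -- now compute ∫ y in Ioi 0, y ^ 1 • f y
  have h2 : ∫ y in Ioi (0:ℝ), y ^ (2-1) • f y = t / (2 * (t + 1)) := by
    have hzero : ∀ y : ℝ, y ∉ Ioo (0:ℝ) 1 → y ^ (2-1) • f y = 0 := by
      intro y hy
      have : f y = 0 ∨ y = 0 := by
        by_cases hc : 0 ≤ y ∧ y < 1
        · right
          rcases eq_or_lt_of_le hc.1 with h | h
          · exact h.symm
          · exact absurd ⟨h, hc.2⟩ hy
        · left
          simp only [hf]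
          rw [if_neg hc]
      rcases this with h | h
      · rw [h]; simp
      · rw [h]; simp
    have e1 : ∫ y in Ioi (0:ℝ), y ^ (2-1) • f y = ∫ y : ℝ, y ^ (2-1) • f y :=
      setIntegral_eq_integral_of_forall_compl_eq_zero
        (fun y hy => hzero y (fun hmem => hy hmem.1))
    have e2 : (∫ y : ℝ, y ^ (2-1) • f y) = ∫ y in Ioo (0:ℝ) 1, y ^ (2-1) • f y :=
      (setIntegral_eq_integral_of_forall_compl_eq_zero (fun y hy => hzero y hy)).symm
    have e3 : ∫ y in Ioo (0:ℝ) 1, y ^ (2-1) • f y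
        = ∫ y in Ioo (0:ℝ) 1, y * (t / (t * y^2 + 1)^2) := by
      apply setIntegral_congr_fun measurableSet_Ioo
      intro y hy
      have : (0:ℝ) ≤ y ∧ y < 1 := ⟨hy.1.le, hy.2⟩
      simp [hf, this, smul_eq_mul]
    have e4 : ∫ y in Ioo (0:ℝ) 1, y * (t / (t * y^2 + 1)^2)
        = ∫ y in (0:ℝ)..1, y * (t / (t * y^2 + 1)^2) := by
      rw [intervalIntegral.integral_of_le one_pos.le, integral_Ioc_eq_integral_Ioo]
    have e5 : ∫ y in (0:ℝ)..1, y * (t / (t * y^2 + 1)^2)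
        = (-(1/2) * (t * 1^2 + 1)⁻¹) - (-(1/2) * (t * 0^2 + 1)⁻¹) := by
      apply intervalIntegral.integral_eq_sub_of_hasDerivAt
        (f := fun y : ℝ => -(1/2) * (t * y^2 + 1)⁻¹)
      · intro y _
        exact kernel_antideriv ht y
      · apply ContinuousOn.intervalIntegrable
        apply ContinuousOn.mul continuousOn_id
        apply ContinuousOn.div continuousOn_const
        · fun_prop
        · intro y _; positivity
    rw [e1, e2, e3, e4, e5]
    have : t + 1 ≠ 0 := by positivity
    field_simp
    ring
  rw [h2]
  rw [nsmul_eq_mul, smul_eq_mul]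
  have : t + 1 ≠ 0 := by positivity
  field_simp
  ring

set_option maxHeartbeats 2000000 in
/-- Codimension-one concentration of mass on the polydisk: for `g` continuous on
the closed unit polydisk of `ℂ^{n+1}`,
`t·∫_{𝔻^{n+1}} |g|²/(t|z₁|²+1)² dV → π·∫_{𝔻ⁿ} |g(0,z')|² dV(z')` as `t → ∞`. -/
theorem concentration_codim_one
    (n : ℕ) (g : (Fin (n + 1) → ℂ) → ℂ)
    (hg : ContinuousOn g (Metric.closedBall 0 1)) :
    Filter.Tendsto
      (fun t : ℝ => t * ∫ z in Metric.ball (0 : Fin (n + 1) → ℂ) 1,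
        ‖g z‖ ^ 2 / (t * ‖z 0‖ ^ 2 + 1) ^ 2)
      Filter.atTop
      (nhds (Real.pi * ∫ z' in Metric.ball (0 : Fin n → ℂ) 1,
        ‖g (Fin.cons 0 z')‖ ^ 2)) := by
  obtain ⟨M0, hM0⟩ := (isCompact_closedBall (0 : Fin (n+1) → ℂ) 1).exists_bound_of_continuousOn hg
  set M : ℝ := max M0 0 with hM
  have hM_nonneg : 0 ≤ M := le_max_right _ _
  have hgM : ∀ z ∈ closedBall (0 : Fin (n+1) → ℂ) 1, ‖g z‖ ≤ M :=
    fun z hz => (hM0 z hz).trans (le_max_left _ _)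
  set volHn : ℝ := (volume (ball (0 : Fin n → ℂ) 1)).toReal with hvolHn
  have hvolHn_nonneg : 0 ≤ volHn := ENNReal.toReal_nonneg
  set h : ℂ → ℝ := sliceInt n g with hh
  have hhcont : ContinuousOn h (closedBall (0:ℂ) 1) := slice_continuous hg hgM
  have hhbound : ∀ w ∈ closedBall (0:ℂ) 1, |h w| ≤ M^2 * volHn :=
    fun w hw => slice_bound hg hgM hw
  have hvolC : (volume (ball (0:ℂ) 1)).toReal = Real.pi := by
    rw [Complex.volume_ball]
    simp [ENNReal.toReal_mul, ENNReal.toReal_pow]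
  have hpi := Real.pi_pos
  -- kernel integrability
  have hKcont : ∀ t : ℝ, 0 < t →
      ContinuousOn (fun w : ℂ => t / (t * ‖w‖^2 + 1)^2) (closedBall 0 1) := by
    intro t ht
    apply ContinuousOn.div continuousOn_const (by fun_prop)
    intro w _; positivity
  have hKint : ∀ t : ℝ, 0 < t →
      IntegrableOn (fun w : ℂ => t / (t * ‖w‖^2 + 1)^2) (ball 0 1) := fun t ht =>
    ((hKcont t ht).integrableOn_compact (isCompact_closedBall _ _)).mono_set
      ball_subset_closedBall
  have hKh_int : ∀ t : ℝ, 0 < t →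
      IntegrableOn (fun w : ℂ => (t/(t*‖w‖^2+1)^2) * h w) (ball 0 1) := fun t ht =>
    (((hKcont t ht).mul hhcont).integrableOn_compact (isCompact_closedBall _ _)).mono_set
      ball_subset_closedBall
  have hKnonneg : ∀ (t : ℝ), 0 < t → ∀ (w : ℂ), 0 ≤ t/(t*‖w‖^2+1)^2 := by
    intro t ht w; positivity
  rw [Metric.tendsto_atTop]
  intro ε₀ hε₀
  set ε : ℝ := ε₀ / (2 * (volHn * Real.pi + 1)) with hε
  have hεpos : 0 < ε := by
    apply div_pos hε₀
    nlinarith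
  obtain ⟨δ, hδpos, hδ1, hδprop⟩ := slice_continuity_zero hg hεpos
  set A : ℝ := ε * volHn * Real.pi with hA
  have hA_nonneg : 0 ≤ A := by positivity
  have hAlt : A < ε₀ := by
    rw [hA, hε]
    rw [div_mul_eq_mul_div, div_mul_eq_mul_div, div_lt_iff₀ (by nlinarith)]
    nlinarith
  set B : ℝ := 2 * (M^2 * volHn) * Real.pi / δ^4 with hB
  set C : ℝ := Real.pi * (M^2 * volHn) with hC
  have htail : Filter.Tendsto (fun t : ℝ => B / t + C/(t+1)) Filter.atTop (nhds 0) := by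
    have h1 : Filter.Tendsto (fun t:ℝ => B/t) Filter.atTop (nhds 0) :=
      Filter.Tendsto.div_atTop tendsto_const_nhds Filter.tendsto_id
    have h2 : Filter.Tendsto (fun t:ℝ => C/(t+1)) Filter.atTop (nhds 0) :=
      Filter.Tendsto.div_atTop tendsto_const_nhds (Filter.tendsto_atTop_add_const_right _ 1 Filter.tendsto_id)
    simpa using h1.add h2
  have hev : ∀ᶠ t : ℝ in Filter.atTop, B/t + C/(t+1) < ε₀ - A :=
    htail.eventually_lt_const (by linarith)
  obtain ⟨N, hN⟩ := Filter.eventually_atTop.mp (hev.and (Filter.eventually_ge_atTop 1))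
  refine ⟨N, fun t htN => ?_⟩
  obtain ⟨hlt, ht1⟩ := hN t htN
  have ht : (0:ℝ) < t := lt_of_lt_of_le one_pos ht1
  rw [Real.dist_eq]
  have hred : t * (∫ z in ball (0 : Fin (n+1) → ℂ) 1, ‖g z‖^2 / (t * ‖z 0‖^2 + 1)^2)
      = ∫ w in ball (0:ℂ) 1, (t / (t * ‖w‖^2 + 1)^2) * h w := reduction n g hg t ht
  have hgoal0 : (∫ z' in ball (0 : Fin n → ℂ) 1, ‖g (Fin.cons 0 z')‖ ^ 2) = h 0 := rfl
  rw [hred, hgoal0]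
  -- key estimate
  have hKint' := hKint t ht
  have hKh := hKh_int t ht
  have hKh0 : IntegrableOn (fun w : ℂ => (t/(t*‖w‖^2+1)^2) * h 0) (ball 0 1) :=
    hKint'.mul_const _
  have hdiffInt : IntegrableOn (fun w : ℂ => (t/(t*‖w‖^2+1)^2) * (h w - h 0)) (ball 0 1) := by
    simp only [mul_sub]; exact hKh.sub hKh0
  have hsplit_id : (∫ w in ball (0:ℂ) 1, (t/(t*‖w‖^2+1)^2) * h w) - Real.pi * h 0
      = (∫ w in ball (0:ℂ) 1, (t/(t*‖w‖^2+1)^2) * (h w - h 0))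
        + ((∫ w in ball (0:ℂ) 1, t/(t*‖w‖^2+1)^2) - Real.pi) * h 0 := by
    have e1 : ∫ w in ball (0:ℂ) 1, (t/(t*‖w‖^2+1)^2) * (h w - h 0)
        = (∫ w in ball (0:ℂ) 1, (t/(t*‖w‖^2+1)^2) * h w)
          - (∫ w in ball (0:ℂ) 1, t/(t*‖w‖^2+1)^2) * h 0 := by
      simp only [mul_sub]
      rw [integral_sub hKh hKh0, integral_mul_const]
    rw [e1]; ring
  rw [hsplit_id]
  have hker := kernel_integral (t := t) ht
  -- third term
  have hterm3 : |((∫ w in ball (0:ℂ) 1, t/(t*‖w‖^2+1)^2) - Real.pi) * h 0| ≤ C/(t+1) := by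
    rw [hker, abs_mul]
    have h0b : |h 0| ≤ M^2 * volHn := hhbound 0 (mem_closedBall_self one_pos.le)
    have ht1' : t + 1 ≠ 0 := by positivity
    have habs : |Real.pi * (t/(t+1)) - Real.pi| = Real.pi * (1/(t+1)) := by
      rw [show Real.pi * (t/(t+1)) - Real.pi = -(Real.pi * (1/(t+1))) by field_simp; ring]
      rw [abs_neg, abs_of_nonneg (by positivity)]
    rw [habs]
    calc Real.pi * (1/(t+1)) * |h 0| ≤ Real.pi * (1/(t+1)) * (M^2*volHn) :=
          mul_le_mul_of_nonneg_left h0b (by positivity)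
      _ = C/(t+1) := by rw [hC]; field_simp
  -- split domain
  have hunion : (ball (0:ℂ) 1 ∩ ball (0:ℂ) δ) ∪ (ball (0:ℂ) 1 \ ball (0:ℂ) δ) = ball (0:ℂ) 1 :=
    Set.inter_union_diff _ _
  have hdisj : Disjoint (ball (0:ℂ) 1 ∩ ball (0:ℂ) δ) (ball (0:ℂ) 1 \ ball (0:ℂ) δ) :=
    (disjoint_compl_right (a := ball (0:ℂ) δ)).mono Set.inter_subset_right
      (fun x hx => hx.2)
  have hIsplit : (∫ w in ball (0:ℂ) 1, (t/(t*‖w‖^2+1)^2) * (h w - h 0))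
      = (∫ w in ball (0:ℂ) 1 ∩ ball (0:ℂ) δ, (t/(t*‖w‖^2+1)^2) * (h w - h 0))
        + (∫ w in ball (0:ℂ) 1 \ ball (0:ℂ) δ, (t/(t*‖w‖^2+1)^2) * (h w - h 0)) := by
    rw [← setIntegral_union hdisj (measurableSet_ball.diff measurableSet_ball)
      (hdiffInt.mono_set Set.inter_subset_left) (hdiffInt.mono_set Set.diff_subset), hunion]
  rw [hIsplit]
  -- term A bound
  have htermA : |∫ w in ball (0:ℂ) 1 ∩ ball (0:ℂ) δ, (t/(t*‖w‖^2+1)^2) * (h w - h 0)| ≤ A := by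
    rw [← Real.norm_eq_abs]
    calc ‖∫ w in ball (0:ℂ) 1 ∩ ball (0:ℂ) δ, (t/(t*‖w‖^2+1)^2) * (h w - h 0)‖
        ≤ ∫ w in ball (0:ℂ) 1 ∩ ball (0:ℂ) δ, ‖(t/(t*‖w‖^2+1)^2) * (h w - h 0)‖ :=
          norm_integral_le_integral_norm _
      _ ≤ ∫ w in ball (0:ℂ) 1 ∩ ball (0:ℂ) δ, (t/(t*‖w‖^2+1)^2) * (ε * volHn) := by
          have hKc : IntegrableOn (fun w : ℂ => (t/(t*‖w‖^2+1)^2) * (ε * volHn)) (ball 0 1) :=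
            hKint'.mul_const _
          apply setIntegral_mono_on ((hdiffInt.mono_set Set.inter_subset_left).norm)
            (hKc.mono_set Set.inter_subset_left)
            (measurableSet_ball.inter measurableSet_ball)
          intro w hw
          rw [norm_mul, Real.norm_of_nonneg (hKnonneg t ht w)]
          apply mul_le_mul_of_nonneg_left ?_ (hKnonneg t ht w)
          rw [Real.norm_eq_abs]
          exact hδprop w (mem_ball_zero_iff.mp hw.2)
      _ = (∫ w in ball (0:ℂ) 1 ∩ ball (0:ℂ) δ, t/(t*‖w‖^2+1)^2) * (ε * volHn) :=
          integral_mul_const _ _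
      _ ≤ Real.pi * (ε * volHn) := by
          apply mul_le_mul_of_nonneg_right ?_ (by positivity)
          have hmono : (∫ w in ball (0:ℂ) 1 ∩ ball (0:ℂ) δ, t/(t*‖w‖^2+1)^2)
              ≤ ∫ w in ball (0:ℂ) 1, t/(t*‖w‖^2+1)^2 := by
            apply setIntegral_mono_set hKint'
              (Filter.Eventually.of_forall (fun w => hKnonneg t ht w))
              (HasSubset.Subset.eventuallyLE Set.inter_subset_left)
          rw [hker] at hmono
          apply hmono.trans
          have : t/(t+1) ≤ 1 := by
            rw [div_le_one (by positivity)]; linarith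
          nlinarith
      _ = A := by rw [hA]; ring
  -- term B bound
  have htermB : |∫ w in ball (0:ℂ) 1 \ ball (0:ℂ) δ, (t/(t*‖w‖^2+1)^2) * (h w - h 0)| ≤ B/t := by
    rw [← Real.norm_eq_abs]
    have hbd : ∀ w ∈ ball (0:ℂ) 1 \ ball (0:ℂ) δ,
        ‖(t/(t*‖w‖^2+1)^2) * (h w - h 0)‖ ≤ (1/(t*δ^4)) * (2*(M^2*volHn)) := by
      intro w hw
      rw [norm_mul, Real.norm_of_nonneg (hKnonneg t ht w), Real.norm_eq_abs]
      have hwδ : δ ≤ ‖w‖ := by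
        have := hw.2
        rw [mem_ball_zero_iff] at this
        exact not_lt.1 this
      have hK_le : t/(t*‖w‖^2+1)^2 ≤ 1/(t*δ^4) := by
        have hδ2 : δ^2 ≤ ‖w‖^2 := by nlinarith
        have h1 : t*δ^2 ≤ t*‖w‖^2 + 1 := by nlinarith
        have h2 : (t*δ^2)^2 ≤ (t*‖w‖^2+1)^2 :=
          pow_le_pow_left₀ (by positivity) h1 2
        have h3 : (0:ℝ) < (t*δ^2)^2 := by positivity
        calc t/(t*‖w‖^2+1)^2 ≤ t/(t*δ^2)^2 := by gcongr
          _ = 1/(t*δ^4) := by field_simp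
      have hhd : |h w - h 0| ≤ 2*(M^2*volHn) := by
        have hwb : w ∈ closedBall (0:ℂ) 1 := ball_subset_closedBall hw.1
        calc |h w - h 0| ≤ |h w| + |h 0| := abs_sub _ _
          _ ≤ M^2*volHn + M^2*volHn :=
              add_le_add (hhbound w hwb) (hhbound 0 (mem_closedBall_self one_pos.le))
          _ = 2*(M^2*volHn) := by ring
      exact mul_le_mul hK_le hhd (abs_nonneg _) (by positivity)
    calc ‖∫ w in ball (0:ℂ) 1 \ ball (0:ℂ) δ, (t/(t*‖w‖^2+1)^2) * (h w - h 0)‖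
        ≤ ((1/(t*δ^4)) * (2*(M^2*volHn))) * (volume (ball (0:ℂ) 1 \ ball (0:ℂ) δ)).toReal :=
          norm_setIntegral_le_of_norm_le_const
            (lt_of_le_of_lt (measure_mono Set.diff_subset) measure_ball_lt_top) hbd
      _ ≤ ((1/(t*δ^4)) * (2*(M^2*volHn))) * Real.pi := by
          apply mul_le_mul_of_nonneg_left ?_ (by positivity)
          rw [← hvolC]
          exact ENNReal.toReal_mono measure_ball_lt_top.ne (measure_mono Set.diff_subset)
      _ = B/t := by
          have hδne : δ ≠ 0 := ne_of_gt hδpos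
          have htne : t ≠ 0 := ne_of_gt ht
          rw [hB]
          ring
  calc |((∫ w in ball (0:ℂ) 1 ∩ ball (0:ℂ) δ, (t/(t*‖w‖^2+1)^2) * (h w - h 0))
          + (∫ w in ball (0:ℂ) 1 \ ball (0:ℂ) δ, (t/(t*‖w‖^2+1)^2) * (h w - h 0)))
        + ((∫ w in ball (0:ℂ) 1, t/(t*‖w‖^2+1)^2) - Real.pi) * h 0|
      ≤ |(∫ w in ball (0:ℂ) 1 ∩ ball (0:ℂ) δ, (t/(t*‖w‖^2+1)^2) * (h w - h 0))
          + (∫ w in ball (0:ℂ) 1 \ ball (0:ℂ) δ, (t/(t*‖w‖^2+1)^2) * (h w - h 0))|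
        + |((∫ w in ball (0:ℂ) 1, t/(t*‖w‖^2+1)^2) - Real.pi) * h 0| := abs_add_le _ _
    _ ≤ (|∫ w in ball (0:ℂ) 1 ∩ ball (0:ℂ) δ, (t/(t*‖w‖^2+1)^2) * (h w - h 0)|
          + |∫ w in ball (0:ℂ) 1 \ ball (0:ℂ) δ, (t/(t*‖w‖^2+1)^2) * (h w - h 0)|)
        + |((∫ w in ball (0:ℂ) 1, t/(t*‖w‖^2+1)^2) - Real.pi) * h 0| := by
        apply add_le_add_left (abs_add_le _ _)
    _ ≤ (A + B/t) + C/(t+1) := by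
        apply add_le_add (add_le_add htermA htermB) hterm3
    _ < ε₀ := by linarith
end Aux
end

section
/- Concentration of mass in codimension k: Fix an integer k ≥ 1 and a real number ε > 0, and let u : ℂ^k → ℝ be continuous and bounded on the open Euclidean ball B(0, ε) ⊂ ℂ^k. Then lim_{t → +∞} t^k·∫_{B(0,ε)} u(w) / (t|w|² + 1)^{k+1} dV(w) = (π^k/k!)·u(0). -/
open MeasureTheory Filter Set Module Topology

noncomputable section ConcentrationAux

namespace ConcentrationAux

def cEquiv (k : ℕ) : (Fin k → ℂ) ≃ᵐ EuclideanSpace ℝ (Fin k ⊕ Fin k) :=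
  (MeasurableEquiv.piCongrRight fun _ : Fin k => Complex.measurableEquivRealProd).trans
    ((MeasurableEquiv.arrowProdEquivProdArrow ℝ ℝ (Fin k)).trans
      ((MeasurableEquiv.sumPiEquivProdPi fun _ : Fin k ⊕ Fin k => ℝ).symm.trans
        (MeasurableEquiv.toLp 2 (Fin k ⊕ Fin k → ℝ))))

lemma cEquiv_measurePreserving (k : ℕ) : MeasurePreserving (cEquiv k) := by
  have h1 : MeasurePreserving
      (⇑(MeasurableEquiv.piCongrRight fun _ : Fin k => Complex.measurableEquivRealProd)) :=
    volume_preserving_pi fun _ => Complex.volume_preserving_equiv_real_prod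
  have h2 := volume_measurePreserving_arrowProdEquivProdArrow ℝ ℝ (Fin k)
  have h3 := volume_measurePreserving_sumPiEquivProdPi_symm (fun _ : Fin k ⊕ Fin k => ℝ)
  have h4 := (EuclideanSpace.volume_preserving_symm_measurableEquiv_toLp (Fin k ⊕ Fin k)).symm
  exact ((h4.comp h3).comp h2).comp h1

lemma cEquiv_norm_sq (k : ℕ) (w : Fin k → ℂ) :
    ‖cEquiv k w‖ ^ 2 = ∑ j, ‖w j‖ ^ 2 := by
  rw [EuclideanSpace.norm_eq, Real.sq_sqrt (by positivity)]
  rw [Fintype.sum_sum_type]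
  have hl : ∀ i : Fin k, cEquiv k w (Sum.inl i) = (w i).re := fun _ => rfl
  have hr : ∀ i : Fin k, cEquiv k w (Sum.inr i) = (w i).im := fun _ => rfl
  simp_rw [hl, hr, ← Finset.sum_add_distrib]
  refine Finset.sum_congr rfl fun i _ => ?_
  simp [Real.norm_eq_abs, sq_abs, Complex.sq_norm, Complex.normSq_apply]
  ring

lemma integral_transfer (k : ℕ) (f : ℝ → ℝ) :
    ∫ w : Fin k → ℂ, f (∑ j, ‖w j‖ ^ 2) = ∫ x : EuclideanSpace ℝ (Fin k ⊕ Fin k), f (‖x‖ ^ 2) := by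
  rw [← (cEquiv_measurePreserving k).integral_comp (cEquiv k).measurableEmbedding
    (fun x => f (‖x‖ ^ 2))]
  simp_rw [cEquiv_norm_sq]

lemma integrable_transfer (k : ℕ) {f : ℝ → ℝ}
    (hf : Integrable (fun x : EuclideanSpace ℝ (Fin k ⊕ Fin k) => f (‖x‖ ^ 2))) :
    Integrable (fun w : Fin k → ℂ => f (∑ j, ‖w j‖ ^ 2)) := by
  have := ((cEquiv_measurePreserving k).integrable_comp_emb
    (cEquiv k).measurableEmbedding).2 hf
  refine this.congr (Eventually.of_forall fun w => ?_)
  simp only [Function.comp_apply, cEquiv_norm_sq]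

lemma oneD (m : ℕ) :
    ∫ y in Ioi (0:ℝ), y ^ (m + m + 1) * (((y ^ 2 + 1)) ^ (m + 2))⁻¹
      = (2 * ((m : ℝ) + 1))⁻¹ := by
  have hne : ∀ y : ℝ, (1 + y ^ 2) ≠ 0 := fun y => by positivity
  set g : ℝ → ℝ := fun y => (y ^ 2 / (1 + y ^ 2)) ^ (m + 1) / (2 * ((m : ℝ) + 1)) with hg
  have hd : ∀ y : ℝ, HasDerivAt g
      ((((m : ℝ) + 1) * (y ^ 2 / (1 + y ^ 2)) ^ m *
        ((2 * y * (1 + y ^ 2) - y ^ 2 * (2 * y)) / (1 + y ^ 2) ^ 2)) / (2 * ((m : ℝ) + 1))) y := by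
    intro y
    have h1 : HasDerivAt (fun x : ℝ => x ^ 2) (2 * y) y := by simpa using hasDerivAt_pow 2 y
    have h2 : HasDerivAt (fun x : ℝ => 1 + x ^ 2) (2 * y) y := h1.const_add 1
    have h3 := ((h1.div h2 (hne y)).pow (m + 1)).div_const (2 * ((m : ℝ) + 1))
    simpa [Nat.add_sub_cancel] using h3
  have hderiv : ∀ y ∈ Ioi (0:ℝ), HasDerivAt g (y ^ (m + m + 1) * (((y ^ 2 + 1)) ^ (m + 2))⁻¹) y := by
    intro y hy
    convert hd y using 1
    have h1y : (0:ℝ) < 1 + y ^ 2 := by positivity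
    have hm1 : ((m : ℝ) + 1) ≠ 0 := by positivity
    rw [div_pow]
    field_simp
    ring
  have hpos : ∀ y ∈ Ioi (0:ℝ), 0 ≤ y ^ (m + m + 1) * (((y ^ 2 + 1)) ^ (m + 2))⁻¹ := by
    intro y hy
    have : (0:ℝ) < y := hy
    positivity
  have hlim : Tendsto g atTop (𝓝 ((2 * ((m : ℝ) + 1)))⁻¹) := by
    have heq : ∀ y : ℝ, y ^ 2 / (1 + y ^ 2) = 1 - (1 + y ^ 2)⁻¹ := by
      intro y; field_simp; ring
    have h2 : Tendsto (fun y : ℝ => 1 + y ^ 2) atTop atTop :=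
      tendsto_atTop_add_const_left _ 1 (tendsto_pow_atTop two_ne_zero)
    have h1 : Tendsto (fun y : ℝ => y ^ 2 / (1 + y ^ 2)) atTop (𝓝 1) := by
      simp_rw [heq]
      simpa using tendsto_const_nhds.sub h2.inv_tendsto_atTop
    have := (h1.pow (m + 1)).div_const (2 * ((m : ℝ) + 1))
    simpa using this
  have := integral_Ioi_of_hasDerivAt_of_nonneg
    ((hd 0).continuousAt.continuousWithinAt) hderiv hpos hlim
  rw [this, hg]
  norm_num

lemma const_eval (m : ℕ) :
    ∫ w : Fin (m + 1) → ℂ, (((∑ j, ‖w j‖ ^ 2) + 1) ^ (m + 2))⁻¹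
      = Real.pi ^ (m + 1) / (Nat.factorial (m + 1)) := by
  have htr := integral_transfer (m + 1) (fun s => ((s + 1) ^ (m + 2))⁻¹)
  rw [htr]
  haveI : Nonempty (Fin (m+1) ⊕ Fin (m+1)) := ⟨Sum.inl 0⟩
  have h : ∫ x : EuclideanSpace ℝ (Fin (m+1) ⊕ Fin (m+1)), ((‖x‖ ^ 2 + 1) ^ (m + 2))⁻¹
      = finrank ℝ (EuclideanSpace ℝ (Fin (m+1) ⊕ Fin (m+1))) •
        ((volume (Metric.ball (0 : EuclideanSpace ℝ (Fin (m+1) ⊕ Fin (m+1))) 1)).toReal •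
          ∫ y in Ioi (0 : ℝ),
            y ^ (finrank ℝ (EuclideanSpace ℝ (Fin (m+1) ⊕ Fin (m+1))) - 1) •
              ((y ^ 2 + 1) ^ (m + 2))⁻¹) :=
    integral_fun_norm_addHaar volume (fun r => ((r ^ 2 + 1) ^ (m + 2))⁻¹)
  have hdim : finrank ℝ (EuclideanSpace ℝ (Fin (m+1) ⊕ Fin (m+1))) = (m+1) + (m+1) := by
    simp [finrank_euclideanSpace]
  have hvol : (volume (Metric.ball (0 : EuclideanSpace ℝ (Fin (m+1) ⊕ Fin (m+1))) 1)).toReal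
      = Real.pi ^ (m+1) / (Nat.factorial (m+1)) := by
    rw [EuclideanSpace.volume_ball]
    have hcard : Fintype.card (Fin (m+1) ⊕ Fin (m+1)) = (m+1) + (m+1) := by simp
    rw [hcard, ENNReal.ofReal_one, one_pow, one_mul, ENNReal.toReal_ofReal (by positivity)]
    have h1 : Real.sqrt Real.pi ^ ((m+1) + (m+1)) = Real.pi ^ (m+1) := by
      rw [← two_mul, pow_mul, Real.sq_sqrt Real.pi_nonneg]
    have h2 : ((((m+1) + (m+1) : ℕ)) : ℝ)/2 + 1 = ((m + 1 : ℕ) : ℝ) + 1 := by push_cast; ring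
    rw [h1, h2, Real.Gamma_nat_eq_factorial]
  rw [h, hdim, hvol]
  have hexp : (m+1) + (m+1) - 1 = m + m + 1 := by omega
  simp_rw [smul_eq_mul, hexp, oneD m, nsmul_eq_mul]
  have hm1 : ((m:ℝ) + 1) ≠ 0 := by positivity
  have hfac : ((Nat.factorial (m+1) : ℝ)) ≠ 0 := by positivity
  push_cast
  field_simp
  ring

lemma integrable_base (m : ℕ) :
    Integrable (fun w : Fin (m+1) → ℂ => (((∑ j, ‖w j‖ ^ 2) + 1) ^ (m + 2))⁻¹) := by
  apply integrable_transfer (m+1) (f := fun s => ((s + 1) ^ (m + 2))⁻¹)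
  have hnr : (finrank ℝ (EuclideanSpace ℝ (Fin (m+1) ⊕ Fin (m+1))) : ℝ) < (2*(m+2) : ℝ) := by
    simp only [finrank_euclideanSpace, Fintype.card_sum, Fintype.card_fin]
    push_cast; linarith
  have hint := integrable_rpow_neg_one_add_norm_sq
    (E := EuclideanSpace ℝ (Fin (m+1) ⊕ Fin (m+1))) (μ := volume) hnr
  refine hint.congr (Eventually.of_forall fun x => ?_)
  show (1 + ‖x‖ ^ 2) ^ (-(2*((m:ℝ)+2))/2) = ((‖x‖ ^ 2 + 1) ^ (m + 2))⁻¹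
  rw [show (-(2*((m:ℝ)+2))/2) = -(((m+2 : ℕ)):ℝ) by push_cast; ring]
  rw [Real.rpow_neg (by positivity), Real.rpow_natCast, add_comm]


end ConcentrationAux

open ConcentrationAux

/-- Concentration of mass in codimension `k`: for `u` continuous and bounded on
the Euclidean ball `B(0,ε) = {w ∈ ℂᵏ : |w| < ε}` (written `{w | ∑ⱼ‖wⱼ‖² < ε²}`),
`t^k·∫_{B(0,ε)} u(w)/(t|w|²+1)^{k+1} dV(w) → (πᵏ/k!)·u(0)` as `t → ∞`. -/
theorem concentration_codim_k
    (k : ℕ) (hk : 1 ≤ k) (ε : ℝ) (hε : 0 < ε)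
    (u : (Fin k → ℂ) → ℝ)
    (hu : ContinuousOn u {w : Fin k → ℂ | ∑ j, ‖w j‖ ^ 2 < ε ^ 2})
    (hb : ∃ M : ℝ, ∀ w ∈ {w : Fin k → ℂ | ∑ j, ‖w j‖ ^ 2 < ε ^ 2}, |u w| ≤ M) :
    Filter.Tendsto
      (fun t : ℝ => t ^ k * ∫ w in {w : Fin k → ℂ | ∑ j, ‖w j‖ ^ 2 < ε ^ 2},
        u w / (t * (∑ j, ‖w j‖ ^ 2) + 1) ^ (k + 1))
      Filter.atTop
      (nhds ((Real.pi ^ k / k.factorial) * u 0)) := by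
  obtain ⟨M, hM⟩ := hb
  obtain ⟨m, rfl⟩ : ∃ m, k = m + 1 := ⟨k - 1, by omega⟩
  show Filter.Tendsto
      (fun t : ℝ => t ^ (m+1) * ∫ w in {w : Fin (m+1) → ℂ | ∑ j, ‖w j‖ ^ 2 < ε ^ 2},
        u w / (t * (∑ j, ‖w j‖ ^ 2) + 1) ^ (m + 2))
      Filter.atTop
      (𝓝 ((Real.pi ^ (m+1) / (Nat.factorial (m+1))) * u 0))
  have hQc : Continuous (fun w : Fin (m+1) → ℂ => ∑ j, ‖w j‖ ^ 2) :=
    continuous_finset_sum _ fun j _ => ((continuous_apply j).norm.pow 2)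
  have hQ0 : ∀ v : Fin (m+1) → ℂ, 0 ≤ ∑ j, ‖v j‖ ^ 2 :=
    fun v => Finset.sum_nonneg fun j _ => by positivity
  set S : Set (Fin (m+1) → ℂ) := {w | ∑ j, ‖w j‖ ^ 2 < ε ^ 2} with hS
  have hSopen : IsOpen S := isOpen_lt hQc continuous_const
  have h0S : (0 : Fin (m+1) → ℂ) ∈ S := by
    rw [hS]
    simp only [Set.mem_setOf_eq, Pi.zero_apply, norm_zero]
    have : ∑ _j : Fin (m+1), (0:ℝ) ^ 2 = 0 := by simp
    rw [this]
    positivity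
  have hM0 : 0 ≤ M := le_trans (abs_nonneg _) (hM 0 h0S)
  have hu0 : ContinuousAt u 0 := hu.continuousAt (hSopen.mem_nhds h0S)
  have hsqrt : Filter.Tendsto Real.sqrt atTop atTop := by
    refine tendsto_atTop_atTop.2 fun b => ⟨max (b*b) 0, fun x hx => ?_⟩
    rcases le_or_gt b 0 with hb' | hb'
    · exact hb'.trans (Real.sqrt_nonneg x)
    · calc b = Real.sqrt (b*b) := (Real.sqrt_mul_self hb'.le).symm
        _ ≤ Real.sqrt x := Real.sqrt_le_sqrt ((le_max_left _ _).trans hx)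
  have hc0 : Filter.Tendsto (fun t : ℝ => (Real.sqrt t)⁻¹) atTop (𝓝 0) :=
    hsqrt.inv_tendsto_atTop
  set G : ℝ → (Fin (m+1) → ℂ) → ℝ := fun t v =>
    Set.indicator {v : Fin (m+1) → ℂ | (∑ j, ‖v j‖ ^ 2) < t * ε ^ 2}
      (fun v => u ((Real.sqrt t)⁻¹ • v) * (((∑ j, ‖v j‖ ^ 2) + 1) ^ (m + 2))⁻¹) v with hG
  have hsm : ∀ (t : ℝ), 0 < t → ∀ v : Fin (m+1) → ℂ,
      (∑ j, ‖((Real.sqrt t)⁻¹ • v) j‖ ^ 2) = t⁻¹ * ∑ j, ‖v j‖ ^ 2 := by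
    intro t ht v
    rw [Finset.mul_sum]
    refine Finset.sum_congr rfl fun j _ => ?_
    rw [Pi.smul_apply, norm_smul, mul_pow, Real.norm_eq_abs, sq_abs, inv_pow,
      Real.sq_sqrt ht.le]
  have hmemS : ∀ (t : ℝ), 0 < t → ∀ v : Fin (m+1) → ℂ,
      ((Real.sqrt t)⁻¹ • v ∈ S ↔ v ∈ {v : Fin (m+1) → ℂ | (∑ j, ‖v j‖ ^ 2) < t * ε ^ 2}) := by
    intro t ht v
    rw [hS, Set.mem_setOf_eq, Set.mem_setOf_eq, hsm t ht v, inv_mul_eq_div, div_lt_iff₀ ht]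
    rw [mul_comm]
  have hO : ∀ t : ℝ, IsOpen {v : Fin (m+1) → ℂ | (∑ j, ‖v j‖ ^ 2) < t * ε ^ 2} :=
    fun t => isOpen_lt hQc continuous_const
  have hfr : finrank ℝ (Fin (m+1) → ℂ) = 2 * (m+1) := by
    rw [finrank_pi_fintype, Complex.finrank_real_complex]
    simp [Finset.sum_const, mul_comm]
  -- Step 1 : substitution
  have step1 : ∀ᶠ t : ℝ in atTop,
      t ^ (m+1) * ∫ w in S, u w / (t * (∑ j, ‖w j‖ ^ 2) + 1) ^ (m + 2) = ∫ v, G t v := by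
    filter_upwards [eventually_gt_atTop (0:ℝ)] with t ht
    have key : ∀ v : Fin (m+1) → ℂ,
        (S.indicator fun w => u w / (t * (∑ j, ‖w j‖ ^ 2) + 1) ^ (m + 2))
          ((Real.sqrt t)⁻¹ • v) = G t v := by
      intro v
      have hval : u ((Real.sqrt t)⁻¹ • v) /
            (t * (∑ j, ‖((Real.sqrt t)⁻¹ • v) j‖ ^ 2) + 1) ^ (m + 2)
          = u ((Real.sqrt t)⁻¹ • v) * (((∑ j, ‖v j‖ ^ 2) + 1) ^ (m + 2))⁻¹ := by
        rw [hsm t ht v, ← mul_assoc, mul_inv_cancel₀ ht.ne', one_mul, div_eq_mul_inv]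
      simp only [hG, Set.indicator_apply]
      rw [if_congr (hmemS t ht v) hval rfl]
    have habs : |(((Real.sqrt t)⁻¹) ^ (2 * (m+1)))⁻¹| = t ^ (m+1) := by
      rw [inv_pow, inv_inv, abs_of_nonneg (by positivity), pow_mul, Real.sq_sqrt ht.le]
    rw [show (∫ v, G t v)
        = ∫ v, (S.indicator fun w => u w / (t * (∑ j, ‖w j‖ ^ 2) + 1) ^ (m + 2))
            ((Real.sqrt t)⁻¹ • v) from
      (integral_congr_ae (Filter.Eventually.of_forall key)).symm]
    rw [MeasureTheory.Measure.integral_comp_smul volume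
      (S.indicator fun w => u w / (t * (∑ j, ‖w j‖ ^ 2) + 1) ^ (m + 2)) (Real.sqrt t)⁻¹]
    rw [hfr, habs, smul_eq_mul, integral_indicator hSopen.measurableSet]
  -- Step 2 : dominated convergence
  have hmeas : ∀ᶠ t : ℝ in atTop, AEStronglyMeasurable (G t) volume := by
    filter_upwards [eventually_gt_atTop (0:ℝ)] with t ht
    simp only [hG]
    rw [aestronglyMeasurable_indicator_iff (hO t).measurableSet]
    refine ContinuousOn.aestronglyMeasurable ?_ (hO t).measurableSet
    refine ContinuousOn.mul ?_ ?_
    · exact hu.comp (continuous_const_smul _).continuousOn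
        (fun v hv => (hmemS t ht v).2 hv)
    · refine ContinuousOn.inv₀ ((hQc.add continuous_const).pow _).continuousOn ?_
      intro v _
      exact (pow_pos (by linarith [hQ0 v]) _).ne'
  have h_bound : ∀ᶠ t : ℝ in atTop, ∀ᵐ v : Fin (m+1) → ℂ,
      ‖G t v‖ ≤ M * (((∑ j, ‖v j‖ ^ 2) + 1) ^ (m + 2))⁻¹ := by
    filter_upwards [eventually_gt_atTop (0:ℝ)] with t ht
    refine Filter.Eventually.of_forall fun v => ?_
    have hinv : 0 ≤ (((∑ j, ‖v j‖ ^ 2) + 1) ^ (m + 2))⁻¹ :=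
      inv_nonneg.2 (pow_nonneg (by linarith [hQ0 v]) _)
    simp only [hG, Real.norm_eq_abs]
    by_cases hv : v ∈ {v : Fin (m+1) → ℂ | (∑ j, ‖v j‖ ^ 2) < t * ε ^ 2}
    · rw [Set.indicator_of_mem hv, abs_mul, abs_of_nonneg hinv]
      exact mul_le_mul_of_nonneg_right (hM _ ((hmemS t ht v).2 hv)) hinv
    · rw [Set.indicator_of_notMem hv, abs_zero]
      exact mul_nonneg hM0 hinv
  have hbound_int : Integrable
      (fun v : Fin (m+1) → ℂ => M * (((∑ j, ‖v j‖ ^ 2) + 1) ^ (m + 2))⁻¹) :=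
    (integrable_base m).const_mul M
  have h_lim : ∀ᵐ v : Fin (m+1) → ℂ, Filter.Tendsto (fun t => G t v) atTop
      (𝓝 (u 0 * (((∑ j, ‖v j‖ ^ 2) + 1) ^ (m + 2))⁻¹)) := by
    refine Filter.Eventually.of_forall fun v => ?_
    have hev : ∀ᶠ t : ℝ in atTop,
        G t v = u ((Real.sqrt t)⁻¹ • v) * (((∑ j, ‖v j‖ ^ 2) + 1) ^ (m + 2))⁻¹ := by
      filter_upwards [eventually_gt_atTop ((∑ j, ‖v j‖ ^ 2) / ε ^ 2)] with t ht
      simp only [hG]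
      refine Set.indicator_of_mem (s := {v : Fin (m+1) → ℂ | (∑ j, ‖v j‖ ^ 2) < t * ε ^ 2})
        ?_ _
      show (∑ j, ‖v j‖ ^ 2) < t * ε ^ 2
      have := (div_lt_iff₀ (show (0:ℝ) < ε ^ 2 by positivity)).1 ht
      linarith [this]
    refine Filter.Tendsto.congr' (hev.mono fun t h => h.symm) ?_
    refine Filter.Tendsto.mul_const _ ?_
    have h1 : Filter.Tendsto (fun t : ℝ => (Real.sqrt t)⁻¹ • v) atTop (𝓝 0) := by
      have := hc0.smul_const v
      rwa [zero_smul] at this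
    exact hu0.tendsto.comp h1
  have step2 := tendsto_integral_filter_of_dominated_convergence _ hmeas h_bound
    hbound_int h_lim
  have hval : (∫ v : Fin (m+1) → ℂ, u 0 * (((∑ j, ‖v j‖ ^ 2) + 1) ^ (m + 2))⁻¹)
      = Real.pi ^ (m+1) / (Nat.factorial (m+1)) * u 0 := by
    rw [integral_const_mul, const_eval m, mul_comm]
  rw [hval] at step2
  exact step2.congr' (step1.mono fun t h => h.symm)
end ConcentrationAux
end
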